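/- arXiv:1307.8184 — 6 statements merged into one kernel-verified Lean document; each statement's English description precedes it below -/
import Mathlib

section
/- In every Hilbert algebra, (x → y) → ((y → x) → x) = (y → x) → ((x → y) → y). -/
/-- A Hilbert algebra: ⟨A, →, 1⟩ satisfying (H1), (H2), (H3). -/
class Hilbert (A : Type*) extends One A where
  imp : A → A → A
  H1 : ∀ x y : A, imp x (imp y x) = 1
  H2 : ∀ x y z : A, imp (imp x (imp y z)) (imp (imp x y) (imp x z)) = 1
  H3 : ∀ x y : A, imp x y = 1 → imp y x = 1 → x = y

namespace HilbertAux

open Hilbert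

variable {A : Type*} [Hilbert A]

local infixr:60 " ⤳ " => Hilbert.imp (A := A)

/-- crude modus ponens: from `a = 1` and `a ⤳ b = 1`, get `b = 1`. -/
lemma mp {a b : A} (ha : a = 1) (hab : a ⤳ b = 1) : b = 1 := by
  apply H3
  · -- b ⤳ 1 = 1
    have h1 : b ⤳ ((1 : A) ⤳ b) = 1 := H1 b 1
    rw [ha] at hab
    rw [hab] at h1; exact h1
  · rw [ha] at hab; exact hab

lemma imp_self (a : A) : a ⤳ a = 1 := by
  have h2 := H2 a (a ⤳ a) a
  have h1 := H1 a (a ⤳ a)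
  have h3 : (a ⤳ (a ⤳ a)) ⤳ (a ⤳ a) = 1 := mp h1 h2
  exact mp (H1 a a) h3

lemma imp_one (a : A) : a ⤳ (1 : A) = 1 := by
  have := H1 a a
  rw [imp_self a] at this; exact this

lemma one_imp (a : A) : (1 : A) ⤳ a = a := by
  apply H3
  · -- (1 ⤳ a) ⤳ a = 1
    set t := (1 : A) ⤳ a with ht
    have h2 := H2 t 1 a
    have hpre : t ⤳ ((1 : A) ⤳ a) = 1 := by rw [← ht]; exact imp_self t
    have h3 : (t ⤳ (1 : A)) ⤳ (t ⤳ a) = 1 := mp hpre h2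
    rw [imp_one t] at h3
    exact mp rfl h3
  · exact H1 a 1

lemma le_trans {a b c : A} (hab : a ⤳ b = 1) (hbc : b ⤳ c = 1) : a ⤳ c = 1 := by
  have h2 := H2 a b c
  have hpre : a ⤳ (b ⤳ c) = 1 := by rw [hbc]; exact imp_one a
  have h3 : (a ⤳ b) ⤳ (a ⤳ c) = 1 := mp hpre h2
  rw [hab, one_imp] at h3; exact h3

lemma mono_right {a b : A} (c : A) (h : a ⤳ b = 1) : (c ⤳ a) ⤳ (c ⤳ b) = 1 := by
  have h2 := H2 c a b
  have hpre : c ⤳ (a ⤳ b) = 1 := by rw [h]; exact imp_one c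
  exact mp hpre h2

lemma anti_left {p q : A} (r : A) (h : p ⤳ q = 1) : (q ⤳ r) ⤳ (p ⤳ r) = 1 := by
  have h2 := H2 p q r
  have h1 : (q ⤳ r) ⤳ (p ⤳ (q ⤳ r)) = 1 := H1 (q ⤳ r) p
  have h3 : (q ⤳ r) ⤳ ((p ⤳ q) ⤳ (p ⤳ r)) = 1 := le_trans h1 h2
  rw [h, one_imp] at h3; exact h3

lemma exchange (a b c : A) : (a ⤳ (b ⤳ c)) ⤳ (b ⤳ (a ⤳ c)) = 1 := by
  have h2 := H2 a b c
  have h1 : b ⤳ (a ⤳ b) = 1 := H1 b a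
  have h3 : ((a ⤳ b) ⤳ (a ⤳ c)) ⤳ (b ⤳ (a ⤳ c)) = 1 := anti_left _ h1
  exact le_trans h2 h3

/-- One half of the commutativity law. -/
lemma half (x y : A) :
    ((x ⤳ y) ⤳ ((y ⤳ x) ⤳ x)) ⤳ ((y ⤳ x) ⤳ ((x ⤳ y) ⤳ y)) = 1 := by
  set u := y ⤳ x
  set v := x ⤳ y
  -- step 1 : (v ⤳ (u ⤳ x)) ⤳ (u ⤳ (v ⤳ x)) = 1
  have e : (v ⤳ (u ⤳ x)) ⤳ (u ⤳ (v ⤳ x)) = 1 := exchange v u x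
  -- step 2 : (v ⤳ x) ⤳ (v ⤳ y) = 1
  have s2 : (v ⤳ x) ⤳ (v ⤳ y) = 1 := by
    have h2 := H2 v x y
    have hpre : v ⤳ (x ⤳ y) = 1 := imp_self v
    exact mp hpre h2
  have s3 : (u ⤳ (v ⤳ x)) ⤳ (u ⤳ (v ⤳ y)) = 1 := mono_right u s2
  exact le_trans e s3

end HilbertAux

/-- In every Hilbert algebra, (x → y) → ((y → x) → x) = (y → x) → ((x → y) → y). -/
theorem stmt4 (A : Type*) [Hilbert A] (x y : A) :
    Hilbert.imp (Hilbert.imp x y) (Hilbert.imp (Hilbert.imp y x) x)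
      = Hilbert.imp (Hilbert.imp y x) (Hilbert.imp (Hilbert.imp x y) y) := by
  exact Hilbert.H3 _ _ (HilbertAux.half x y) (HilbertAux.half y x)
end

section
/- Let A be a Hilbert algebra and a, b ∈ A such that the supremum a ∨ b of {a, b} exists with respect to the order x ≤ y iff x → y = 1. Then for every c ∈ A, (a → c) → ((b → c) → ((a ∨ b) → c)) = 1. -/
namespace HilbertAux

variable {A : Type*} [Hilbert A]

local infixr:60 " ⟶h " => Hilbert.imp

lemma one_imp_s6 {u : A} (h : (1 : A) ⟶h u = 1) : u = 1 := by
  refine Hilbert.H3 u 1 ?_ h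
  calc u ⟶h (1 : A) = u ⟶h ((1 : A) ⟶h u) := by rw [h]
    _ = 1 := Hilbert.H1 u 1

lemma mp_s6 {x y : A} (hx : x = 1) (hxy : x ⟶h y = 1) : y = 1 :=
  one_imp_s6 (hx ▸ hxy)

lemma refl (x : A) : x ⟶h x = 1 :=
  mp_s6 (Hilbert.H1 x x) (mp_s6 (Hilbert.H1 x (x ⟶h x)) (Hilbert.H2 x (x ⟶h x) x))

lemma d1 {x y z : A} (h1 : x ⟶h (y ⟶h z) = 1) (h2 : x ⟶h y = 1) : x ⟶h z = 1 :=
  mp_s6 h2 (mp_s6 h1 (Hilbert.H2 x y z))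

lemma lift {x y : A} (h : y = 1) : x ⟶h y = 1 :=
  mp_s6 h (Hilbert.H1 y x)

lemma trans {x y z : A} (h1 : x ⟶h y = 1) (h2 : y ⟶h z = 1) : x ⟶h z = 1 :=
  d1 (lift h2) h1

/-- B combinator. -/
lemma bcomb (x y z : A) : (y ⟶h z) ⟶h ((x ⟶h y) ⟶h (x ⟶h z)) = 1 :=
  trans (Hilbert.H1 (y ⟶h z) x) (Hilbert.H2 x y z)

lemma mono {x y z : A} (h : y ⟶h z = 1) : (x ⟶h y) ⟶h (x ⟶h z) = 1 :=
  mp_s6 h (bcomb x y z)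

/-- C combinator (exchange). -/
lemma ccomb (p q r : A) : (p ⟶h (q ⟶h r)) ⟶h (q ⟶h (p ⟶h r)) = 1 := by
  have h1 : (p ⟶h (q ⟶h r)) ⟶h ((p ⟶h q) ⟶h (p ⟶h r)) = 1 := Hilbert.H2 p q r
  have h2 : (p ⟶h (q ⟶h r)) ⟶h ((q ⟶h (p ⟶h q)) ⟶h (q ⟶h (p ⟶h r))) = 1 :=
    trans h1 (bcomb q (p ⟶h q) (p ⟶h r))
  have h3 : (p ⟶h (q ⟶h r)) ⟶h (q ⟶h (p ⟶h q)) = 1 := lift (Hilbert.H1 q p)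
  exact d1 h2 h3

lemma absorb (x y : A) : x ⟶h ((x ⟶h y) ⟶h y) = 1 :=
  mp_s6 (refl (x ⟶h y)) (ccomb (x ⟶h y) x y)

end HilbertAux

open HilbertAux in
/-- If s is the supremum of {a, b} with respect to the order x ≤ y iff x → y = 1,
then for every c, (a → c) → ((b → c) → ((a ∨ b) → c)) = 1. -/
theorem stmt6 (A : Type*) [Hilbert A] (a b s : A)
    (has : Hilbert.imp a s = 1) (hbs : Hilbert.imp b s = 1)
    (hlub : ∀ u : A, Hilbert.imp a u = 1 → Hilbert.imp b u = 1 → Hilbert.imp s u = 1)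
    (c : A) :
    Hilbert.imp (Hilbert.imp a c)
      (Hilbert.imp (Hilbert.imp b c) (Hilbert.imp s c)) = 1 := by
  set p := Hilbert.imp a c with hp
  set q := Hilbert.imp b c with hq
  -- a ⟶h (p ⟶h (q ⟶h c))
  have hA : Hilbert.imp a (Hilbert.imp p (Hilbert.imp q c)) = 1 :=
    trans (absorb a c) (mono (Hilbert.H1 c q))
  have hB : Hilbert.imp b (Hilbert.imp p (Hilbert.imp q c)) = 1 :=
    trans (absorb b c) (Hilbert.H1 (Hilbert.imp q c) p)
  have hs : Hilbert.imp s (Hilbert.imp p (Hilbert.imp q c)) = 1 := hlub _ hA hB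
  have step1 : Hilbert.imp p (Hilbert.imp s (Hilbert.imp q c)) = 1 :=
    mp_s6 hs (ccomb s p (Hilbert.imp q c))
  exact trans step1 (ccomb s q c)
end

section
/- Let A be a Hilbert algebra and h₁, h₂ surjective Hilbert algebra homomorphisms from A onto the chain C_{n+1}. Then h₁ = h₂ if and only if Ker(h₁) = Ker(h₂), where Ker(h) = {x ∈ A : h(x) = 1}. -/
/-- Two surjective Hilbert algebra homomorphisms from A onto the chain C_{n+1}
(modelled as `Fin (n+1)` with Gödel implication and top `Fin.last n`) are equal
iff they have the same kernel {x : h x = 1}. -/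
theorem stmt9 (A : Type*) [Hilbert A] (n : ℕ)
    (cimp : Fin (n + 1) → Fin (n + 1) → Fin (n + 1))
    (hcimp : cimp = fun x y => if x ≤ y then Fin.last n else y)
    (h₁ h₂ : A → Fin (n + 1))
    (hs₁ : Function.Surjective h₁) (hs₂ : Function.Surjective h₂)
    (hone₁ : h₁ 1 = Fin.last n) (hone₂ : h₂ 1 = Fin.last n)
    (hhom₁ : ∀ x y : A, h₁ (Hilbert.imp x y) = cimp (h₁ x) (h₁ y))
    (hhom₂ : ∀ x y : A, h₂ (Hilbert.imp x y) = cimp (h₂ x) (h₂ y)) :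
    h₁ = h₂ ↔ {x : A | h₁ x = Fin.last n} = {x : A | h₂ x = Fin.last n} := by
  constructor
  · rintro rfl; rfl
  · intro hK
    have hKer : ∀ x : A, h₁ x = Fin.last n ↔ h₂ x = Fin.last n := by
      intro x
      constructor
      · intro hx; exact (Set.ext_iff.mp hK x).mp hx
      · intro hx; exact (Set.ext_iff.mp hK x).mpr hx
    have hclast : ∀ a b : Fin (n + 1), cimp a b = Fin.last n ↔ a ≤ b := by
      intro a b
      subst hcimp
      by_cases h : a ≤ b
      · simp [h]
      · show (if a ≤ b then Fin.last n else b) = Fin.last n ↔ a ≤ b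
        rw [if_neg h]
        constructor
        · intro hb; exact absurd (hb ▸ Fin.le_last a) h
        · intro hb; exact absurd hb h
    have hle : ∀ x y : A, h₁ x ≤ h₁ y ↔ h₂ x ≤ h₂ y := by
      intro x y
      rw [← hclast (h₁ x) (h₁ y), ← hclast (h₂ x) (h₂ y), ← hhom₁, ← hhom₂]
      exact hKer _
    have heq : ∀ x y : A, h₁ x = h₁ y → h₂ x = h₂ y := by
      intro x y h
      exact le_antisymm ((hle x y).mp h.le) ((hle y x).mp h.ge)
    -- define φ : Fin (n+1) → Fin (n+1) with φ (h₁ x) = h₂ x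
    set φ : Fin (n + 1) → Fin (n + 1) :=
      fun a => h₂ (Classical.choose (hs₁ a)) with hφ
    have hφ1 : ∀ x : A, φ (h₁ x) = h₂ x := by
      intro x
      exact heq _ _ (Classical.choose_spec (hs₁ (h₁ x)))
    have hmono : Monotone φ := by
      intro a b hab
      obtain ⟨x, rfl⟩ := hs₁ a
      obtain ⟨y, rfl⟩ := hs₁ b
      rw [hφ1, hφ1]
      exact (hle x y).mp hab
    have hsurj : Function.Surjective φ := by
      intro b
      obtain ⟨y, rfl⟩ := hs₂ b
      exact ⟨h₁ y, hφ1 y⟩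
    have hinj : Function.Injective φ := Finite.injective_iff_surjective.mpr hsurj
    have hsm : StrictMono φ := hmono.strictMono_of_injective hinj
    have hφid : φ = id := by
      apply (hsm.range_inj strictMono_id).mp
      rw [Set.range_id]
      exact Set.range_eq_univ.mpr hsurj
    funext x
    have := hφ1 x
    rw [hφid] at this
    simpa using this
end

section
/- An algebra ⟨A, →, ∨, 1⟩ of type (2,2,0) is a Hilbert algebra with supremum (i.e., ⟨A, →, 1⟩ is a Hilbert algebra, ⟨A, ∨, 1⟩ is a join-semilattice with top 1, and a → b = 1 iff a ∨ b = b) if and only if ⟨A, →, 1⟩ is a Hilbert algebra and the equations (a) x → (x ∨ y) = 1, (b) y → (x ∨ y) = 1, (c) (x → z) → ((y → z) → ((x ∨ y) → z)) = 1 hold identically. -/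
/-- The Hilbert algebra conditions (H1), (H2), (H3) for operations `imp`, `one`. -/
def IsHilbert {A : Type*} (imp : A → A → A) (one : A) : Prop :=
  (∀ x y : A, imp x (imp y x) = one) ∧
  (∀ x y z : A, imp (imp x (imp y z)) (imp (imp x y) (imp x z)) = one) ∧
  (∀ x y : A, imp x y = one → imp y x = one → x = y)

namespace HilbAux

variable {A : Type*} {imp : A → A → A} {one : A}

lemma mp1 (h : IsHilbert imp one) (u : A) (hu : imp one u = one) : u = one := by
  have h1 := h.1 u one
  rw [hu] at h1
  exact h.2.2 u one h1 hu

lemma refl (h : IsHilbert imp one) (x : A) : imp x x = one := by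
  have h2 := h.2.1 x (imp x x) x
  rw [h.1 x (imp x x)] at h2
  have h3 := mp1 h _ h2
  rw [h.1 x x] at h3
  exact mp1 h _ h3

lemma mp (h : IsHilbert imp one) {a b : A} (hab : imp a b = one) (ha : a = one) :
    b = one := by
  rw [ha] at hab
  exact mp1 h b hab

lemma imp_one (h : IsHilbert imp one) (a : A) : imp a one = one :=
  mp1 h _ (h.1 one a)

lemma one_imp (h : IsHilbert imp one) (a : A) : imp one a = a := by
  set u := imp one a with hu
  have h2 := h.2.1 u one a
  rw [← hu, refl h u] at h2
  have h3 := mp1 h _ h2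
  rw [imp_one h u] at h3
  exact h.2.2 u a (mp1 h _ h3) (h.1 a one)

lemma trans (h : IsHilbert imp one) {a b c : A} (hab : imp a b = one)
    (hbc : imp b c = one) : imp a c = one := by
  have h2 := h.2.1 a b c
  rw [hbc, imp_one h, one_imp h, hab, one_imp h] at h2
  exact h2

lemma antitone (h : IsHilbert imp one) {a b : A} (c : A) (hab : imp a b = one) :
    imp (imp b c) (imp a c) = one := by
  have h2 := h.2.1 a b c
  rw [hab, one_imp h] at h2
  exact trans h (h.1 (imp b c) a) h2

lemma exch_ineq (h : IsHilbert imp one) (a b c : A) :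
    imp (imp a (imp b c)) (imp b (imp a c)) = one := by
  have h2 := h.2.1 a b c
  exact trans h h2 (antitone h (imp a c) (h.1 b a))

lemma exch (h : IsHilbert imp one) {a b c : A} (hp : imp a (imp b c) = one) :
    imp b (imp a c) = one :=
  mp h (exch_ineq h a b c) hp

end HilbAux

open HilbAux in
/-- An algebra ⟨A, →, ∨, 1⟩ of type (2,2,0) is a Hilbert algebra with supremum
(⟨A, →, 1⟩ a Hilbert algebra, ⟨A, ∨, 1⟩ a join-semilattice with top 1, and
a → b = 1 iff a ∨ b = b) if and only if ⟨A, →, 1⟩ is a Hilbert algebra and the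
equations (a) x → (x ∨ y) = 1, (b) y → (x ∨ y) = 1 and
(c) (x → z) → ((y → z) → ((x ∨ y) → z)) = 1 hold identically. -/
theorem stmt10 (A : Type*) (imp sup : A → A → A) (one : A) :
    (IsHilbert imp one ∧
      (∀ x y : A, sup x y = sup y x) ∧
      (∀ x y z : A, sup (sup x y) z = sup x (sup y z)) ∧
      (∀ x : A, sup x x = x) ∧
      (∀ x : A, sup x one = one) ∧
      (∀ x y : A, imp x y = one ↔ sup x y = y))
    ↔
    (IsHilbert imp one ∧
      (∀ x y : A, imp x (sup x y) = one) ∧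
      (∀ x y : A, imp y (sup x y) = one) ∧
      (∀ x y z : A, imp (imp x z) (imp (imp y z) (imp (sup x y) z)) = one)) := by
  constructor
  · rintro ⟨h, hcomm, hassoc, hidem, -, hiff⟩
    have ha : ∀ x y : A, imp x (sup x y) = one := by
      intro x y
      rw [hiff]
      rw [← hassoc, hidem]
    have hb : ∀ x y : A, imp y (sup x y) = one := by
      intro x y
      rw [hiff]
      rw [hcomm x y, ← hassoc, hidem, hcomm]
    refine ⟨h, ha, hb, ?_⟩
    intro x y z
    set u := imp x z with hu
    set v := imp y z with hv
    set s := sup x y with hs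
    -- Step 1 : x ≤ u → (v → z)
    have hx : imp x (imp u (imp v z)) = one := by
      have h1 : imp u (imp v (imp x z)) = one := by rw [← hu]; exact h.1 u v
      have h2 : imp u (imp x (imp v z)) = one :=
        trans h h1 (exch_ineq h v x z)
      exact exch h h2
    -- Step 2 : y ≤ u → (v → z)
    have hy : imp y (imp u (imp v z)) = one := by
      have h1 : imp u (imp v (imp y z)) = one := by
        rw [← hv, refl h v]; exact imp_one h u
      have h2 : imp u (imp y (imp v z)) = one :=
        trans h h1 (exch_ineq h v y z)
      exact exch h h2
    -- Step 3 : s ≤ u → (v → z)  (least upper bound via semilattice laws)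
    have hsle : imp s (imp u (imp v z)) = one := by
      rw [hiff]
      rw [hiff] at hx hy
      rw [hs, hassoc, hy, hx]
    -- Step 4 : rearrange
    have h2 : imp u (imp s (imp v z)) = one := exch h hsle
    exact trans h h2 (exch_ineq h s v z)
  · rintro ⟨h, ha, hb, hc⟩
    -- derived order facts
    have hle_sup : ∀ x y z : A, imp x z = one → imp y z = one →
        imp (sup x y) z = one := by
      intro x y z hx hy
      have h1 := hc x y z
      rw [hx, one_imp h, hy, one_imp h] at h1
      exact h1
    have hiff : ∀ x y : A, imp x y = one ↔ sup x y = y := by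
      intro x y
      constructor
      · intro hxy
        exact h.2.2 _ _ (hle_sup x y y hxy (refl h y)) (hb x y)
      · intro hxy
        have := ha x y
        rwa [hxy] at this
    have hcomm : ∀ x y : A, sup x y = sup y x := by
      intro x y
      exact h.2.2 _ _ (hle_sup x y (sup y x) (hb y x) (ha y x))
        (hle_sup y x (sup x y) (hb x y) (ha x y))
    have hidem : ∀ x : A, sup x x = x := fun x => (hiff x x).1 (refl h x)
    have hone : ∀ x : A, sup x one = one :=
      fun x => h.2.2 _ _ (imp_one h _) (hb x one)
    have hassoc : ∀ x y z : A, sup (sup x y) z = sup x (sup y z) := by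
      intro x y z
      apply h.2.2
      · apply hle_sup
        · apply hle_sup
          · exact ha x (sup y z)
          · exact trans h (ha y z) (hb x (sup y z))
        · exact trans h (hb y z) (hb x (sup y z))
      · apply hle_sup
        · exact trans h (ha x y) (ha (sup x y) z)
        · apply hle_sup
          · exact trans h (hb x y) (ha (sup x y) z)
          · exact hb (sup x y) z
    exact ⟨h, hcomm, hassoc, hidem, hone, hiff⟩
end

section
/- In a Hilbert algebra with supremum, every irreducible deductive system is prime: if D is irreducible and a ∨ b ∈ D, then a ∈ D or b ∈ D. -/
/-- A Hilbert algebra with supremum (H^∨-algebra). -/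
class HilbertSup (A : Type*) extends One A where
  imp : A → A → A
  sup : A → A → A
  H1 : ∀ x y : A, imp x (imp y x) = 1
  H2 : ∀ x y z : A, imp (imp x (imp y z)) (imp (imp x y) (imp x z)) = 1
  H3 : ∀ x y : A, imp x y = 1 → imp y x = 1 → x = y
  sup_comm : ∀ x y : A, sup x y = sup y x
  sup_assoc : ∀ x y z : A, sup (sup x y) z = sup x (sup y z)
  sup_idem : ∀ x : A, sup x x = x
  compat : ∀ x y : A, imp x y = 1 ↔ sup x y = y

/-- D is a deductive system: 1 ∈ D and D is closed under modus ponens. -/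
def IsDS {A : Type*} [HilbertSup A] (D : Set A) : Prop :=
  (1 : A) ∈ D ∧ ∀ x y : A, x ∈ D → HilbertSup.imp x y ∈ D → y ∈ D

/-- A proper deductive system D is irreducible iff D = D₁ ∩ D₂ implies
D = D₁ or D = D₂ for deductive systems D₁, D₂. -/
def IsIrred {A : Type*} [HilbertSup A] (D : Set A) : Prop :=
  IsDS D ∧ D ≠ Set.univ ∧
    ∀ D₁ D₂ : Set A, IsDS D₁ → IsDS D₂ → D = D₁ ∩ D₂ → D = D₁ ∨ D = D₂

namespace HilbertSupAux

open HilbertSup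

variable {A : Type*} [HilbertSup A]

lemma imp_self (x : A) : imp x x = 1 := (compat x x).mpr (sup_idem x)

lemma imp_one (x : A) : imp x (1 : A) = 1 := by
  have h := H1 x x
  rwa [imp_self x] at h

lemma eq_one_of_one_imp {x : A} (h : imp (1 : A) x = 1) : x = 1 :=
  H3 x 1 (imp_one x) h

lemma one_imp (x : A) : imp (1 : A) x = x := by
  apply H3
  · -- imp (imp 1 x) x = 1
    have h := H2 (imp (1:A) x) 1 x
    rw [imp_self (imp (1:A) x)] at h
    have h2 := eq_one_of_one_imp h
    rw [imp_one (imp (1:A) x)] at h2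
    exact eq_one_of_one_imp h2
  · exact H1 x 1

lemma le_trans' {x y z : A} (h1 : imp x y = 1) (h2 : imp y z = 1) :
    imp x z = 1 := by
  have h := H2 x y z
  rw [h2, imp_one x, one_imp] at h
  rw [h1, one_imp] at h
  exact h

lemma anti {s t w : A} (h : imp s t = 1) :
    imp (imp t w) (imp s w) = 1 := by
  have h2 := H2 s t w
  rw [h, one_imp] at h2
  exact le_trans' (H1 (imp t w) s) h2

lemma exchange (x y z : A) : imp x (imp y z) = imp y (imp x z) := by
  have key : ∀ u v w : A, imp (imp u (imp v w)) (imp v (imp u w)) = 1 := by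
    intro u v w
    exact le_trans' (H2 u v w) (anti (H1 v u))
  exact H3 _ _ (key x y z) (key y x z)

lemma le_imp_imp (a x : A) : imp a (imp (imp a x) x) = 1 := by
  rw [exchange]
  exact imp_self (imp a x)

lemma sup_le' {a b c : A} (h1 : imp a c = 1) (h2 : imp b c = 1) :
    imp (sup a b) c = 1 := by
  rw [compat] at h1 h2 ⊢
  rw [HilbertSup.sup_assoc, h2, h1]

end HilbertSupAux

open HilbertSup HilbertSupAux in
/-- In a Hilbert algebra with supremum, every irreducible deductive system is
prime: if a ∨ b ∈ D then a ∈ D or b ∈ D. -/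
theorem stmt11 (A : Type*) [HilbertSup A] (D : Set A) (hD : IsIrred D)
    (a b : A) (hab : HilbertSup.sup a b ∈ D) :
    a ∈ D ∨ b ∈ D := by
  by_contra hcon
  push_neg at hcon
  obtain ⟨ha, hb⟩ := hcon
  obtain ⟨⟨h1D, hmp⟩, _, hirr⟩ := hD
  -- the deductive systems generated by D ∪ {a} and D ∪ {b}
  set D₁ : Set A := {y | imp a y ∈ D} with hD₁def
  set D₂ : Set A := {y | imp b y ∈ D} with hD₂def
  have hgen : ∀ p : A, IsDS {y | imp p y ∈ D} := by
    intro p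
    constructor
    · show imp p 1 ∈ D
      rw [imp_one]
      exact h1D
    · intro x y hx hxy
      have h2 : imp (imp p x) (imp p y) ∈ D :=
        hmp _ _ hxy (by rw [H2 p x y]; exact h1D)
      exact hmp _ _ hx h2
  have hsub : ∀ p : A, D ⊆ {y | imp p y ∈ D} := by
    intro p x hx
    exact hmp _ _ hx (by rw [H1 x p]; exact h1D)
  have haD₁ : a ∈ D₁ := by show imp a a ∈ D; rw [HilbertSupAux.imp_self]; exact h1D
  have hbD₂ : b ∈ D₂ := by show imp b b ∈ D; rw [HilbertSupAux.imp_self]; exact h1D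
  have hne : D ≠ D₁ ∩ D₂ := by
    intro h
    rcases hirr D₁ D₂ (hgen a) (hgen b) h with h1 | h2
    · exact ha (h1 ▸ haD₁)
    · exact hb (h2 ▸ hbD₂)
  -- get x ∈ D₁ ∩ D₂ with x ∉ D
  have hx : ∃ x, x ∈ D₁ ∩ D₂ ∧ x ∉ D := by
    by_contra hno
    push_neg at hno
    apply hne
    apply Set.Subset.antisymm
    · exact Set.subset_inter (hsub a) (hsub b)
    · intro x hxmem
      by_contra hxD
      exact hxD (hno x hxmem)
  obtain ⟨x, ⟨hax, hbx⟩, hxD⟩ := hx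
  have hax' : imp a x ∈ D := hax
  have hbx' : imp b x ∈ D := hbx
  -- the element c
  set c : A := imp (imp a x) (imp (imp b x) x) with hcdef
  have hcD : c ∉ D := by
    intro hc
    have h1 : imp (imp b x) x ∈ D := hmp _ _ hax' hc
    exact hxD (hmp _ _ hbx' h1)
  have hac : imp a c = 1 := by
    rw [hcdef, exchange (imp a x) (imp b x) x]
    exact le_trans' (le_imp_imp a x) (H1 (imp (imp a x) x) (imp b x))
  have hbc : imp b c = 1 := by
    rw [hcdef]
    exact le_trans' (le_imp_imp b x) (H1 (imp (imp b x) x) (imp a x))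
  have hsupc : imp (sup a b) c = 1 := sup_le' hac hbc
  exact hcD (hmp _ _ hab (by rw [hsupc]; exact h1D))
end

section
/- Let A be a Hilbert algebra with supremum and h : A → C_{r+1} a surjective H^∨-homomorphism onto the chain C_{r+1} with r ≥ 1. Then Ker(h) = {x : h(x) = 1} is a fully irreducible deductive system of A, i.e., there exists a ∉ Ker(h) such that x → a ∈ Ker(h) for all x ∉ Ker(h). -/
/-- For a surjective H^∨-homomorphism h from A onto the chain C_{r+1}
(modelled as `Fin (r+1)` with Gödel implication, join = max, top = `Fin.last r`),
with r ≥ 1, the kernel {x : h x = 1} is fully irreducible: there exists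
a ∉ Ker(h) such that x → a ∈ Ker(h) for all x ∉ Ker(h). -/
theorem stmt13 (A : Type*) [HilbertSup A] (r : ℕ) (hr : 1 ≤ r)
    (cimp : Fin (r + 1) → Fin (r + 1) → Fin (r + 1))
    (hcimp : cimp = fun x y => if x ≤ y then Fin.last r else y)
    (h : A → Fin (r + 1))
    (hsurj : Function.Surjective h)
    (hone : h (1 : A) = Fin.last r)
    (himp : ∀ x y : A, h (HilbertSup.imp x y) = cimp (h x) (h y))
    (hsup : ∀ x y : A, h (HilbertSup.sup x y) = max (h x) (h y)) :
    ∃ a : A, h a ≠ Fin.last r ∧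
      ∀ x : A, h x ≠ Fin.last r → h (HilbertSup.imp x a) = Fin.last r := by
  obtain ⟨a, ha⟩ := hsurj ⟨r - 1, by omega⟩
  refine ⟨a, ?_, ?_⟩
  · rw [ha]
    intro hc
    have := congrArg Fin.val hc
    simp [Fin.last] at this
    omega
  · intro x hx
    rw [himp, hcimp, ha]
    have hxlt : (h x).val < r := by
      have := (h x).isLt
      rcases Nat.lt_or_ge (h x).val r with h1 | h1
      · exact h1
      · exfalso; apply hx; apply Fin.ext; simp [Fin.last]; omega
    have : h x ≤ (⟨r - 1, by omega⟩ : Fin (r+1)) := by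
      rw [Fin.le_def]; simp; omega
    simp [this]
end
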